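/- Let A, Â ∈ ℝ^{n×n} be symmetric matrices with 0 ⪯ Â ⪯ A, and set P̂ := Â + I and M̂ := P̂^{-1/2}(A+I)P̂^{-1/2}. Then ‖log(M̂)‖_* = trace(log(A+I)) − trace(log(P̂)) = ‖log(A+I) − log(P̂)‖_*. -/

import Mathlib

open MeasureTheory ProbabilityTheory Matrix

/-- Matrix logarithm of a real symmetric matrix, obtained by applying the real logarithm
to the eigenvalues in a spectral decomposition. -/
noncomputable def matLog {n : ℕ} (B : Matrix (Fin n) (Fin n) ℝ) : Matrix (Fin n) (Fin n) ℝ :=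
  if hB : B.IsHermitian then
    (hB.eigenvectorUnitary : Matrix (Fin n) (Fin n) ℝ) *
      Matrix.diagonal (fun i => Real.log (hB.eigenvalues i)) *
      (star (hB.eigenvectorUnitary : Matrix (Fin n) (Fin n) ℝ))
  else 0

/-- The old Mathlib `Matrix.PosSemidef.sqrt` (removed), spelled out with its old definition. -/
noncomputable def posSemidefSqrt {n : ℕ} {B : Matrix (Fin n) (Fin n) ℝ} (hB : B.PosSemidef) :
    Matrix (Fin n) (Fin n) ℝ :=
  (hB.1.eigenvectorUnitary : Matrix (Fin n) (Fin n) ℝ) *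
    Matrix.diagonal (fun i => Real.sqrt (hB.1.eigenvalues i)) *
    (star (hB.1.eigenvectorUnitary : Matrix (Fin n) (Fin n) ℝ))

open scoped Classical in
/-- `B^{-1/2}`: the inverse of the unique positive semidefinite square root of a
positive semidefinite matrix `B`. -/
noncomputable def invSqrt {n : ℕ} (B : Matrix (Fin n) (Fin n) ℝ) : Matrix (Fin n) (Fin n) ℝ :=
  if hB : B.PosSemidef then (posSemidefSqrt hB)⁻¹ else 0

/-- Squared Frobenius norm of a matrix. -/
noncomputable def frobSq {m n : ℕ} (H : Matrix (Fin m) (Fin n) ℝ) : ℝ :=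
  ∑ i, ∑ j, (H i j) ^ 2

/-- Singular values of a matrix (square roots of the eigenvalues of `HᴴH`). -/
noncomputable def singVals {m n : ℕ} (H : Matrix (Fin m) (Fin n) ℝ) : Fin n → ℝ :=
  fun i => Real.sqrt ((show (Hᵀ * H).IsHermitian by
    simpa using Matrix.isHermitian_conjTranspose_mul_self H).eigenvalues i)

/-- Nuclear norm: sum of the singular values. -/
noncomputable def nuclearNorm {m n : ℕ} (H : Matrix (Fin m) (Fin n) ℝ) : ℝ :=
  ∑ i, singVals H i

/-- Spectral norm: largest singular value. -/
noncomputable def specNorm {m n : ℕ} (H : Matrix (Fin m) (Fin n) ℝ) : ℝ :=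
  ⨆ i, singVals H i

/-- Eigenvalues of a symmetric matrix, sorted in decreasing order
(`eigDesc B i` is the `i`-th largest eigenvalue). -/
noncomputable def eigDesc {n : ℕ} (B : Matrix (Fin n) (Fin n) ℝ) : Fin n → ℝ :=
  if hB : B.IsHermitian then
    fun i => (hB.eigenvalues ∘ Tuple.sort hB.eigenvalues) i.rev
  else 0

/-- Law of a standard Gaussian random vector in `ℝⁿ` (i.i.d. `gaussianReal 0 1` entries). -/
noncomputable def stdGaussian (n : ℕ) : Measure (Fin n → ℝ) :=
  Measure.pi fun _ => gaussianReal 0 1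

/-- Law of a random `n × ℓ` matrix with i.i.d. standard Gaussian entries. -/
noncomputable def stdGaussianMatrix (n ℓ : ℕ) : Measure (Fin n → Fin ℓ → ℝ) :=
  Measure.pi fun _ => Measure.pi fun _ => gaussianReal 0 1

/-- The truncated-spectral-decomposition preconditioner `P_r = A_r + I`, where
`A_r = U_r Λ_r U_rᵀ` keeps the `r` leading eigenvalues. -/
noncomputable def truncP {n : ℕ} (U : Matrix (Fin n) (Fin n) ℝ) (lam : Fin n → ℝ) (r : ℕ) :
    Matrix (Fin n) (Fin n) ℝ :=
  U * Matrix.diagonal (fun i : Fin n => if (i : ℕ) < r then lam i else 0) * Uᵀ + 1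

/-- The idealized preconditioned matrix `M_r = P_r^{-1/2} (A + I) P_r^{-1/2}`. -/
noncomputable def truncM {n : ℕ} (A U : Matrix (Fin n) (Fin n) ℝ) (lam : Fin n → ℝ) (r : ℕ) :
    Matrix (Fin n) (Fin n) ℝ :=
  invSqrt (truncP U lam r) * (A + 1) * invSqrt (truncP U lam r)

/-- The Nyström approximation `Â = AΩ(ΩᵀAΩ)⁻¹ΩᵀA`. -/
noncomputable def nystrom {n ℓ : ℕ} (A : Matrix (Fin n) (Fin n) ℝ)
    (Ω : Matrix (Fin n) (Fin ℓ) ℝ) : Matrix (Fin n) (Fin n) ℝ :=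
  A * Ω * (Ωᵀ * A * Ω)⁻¹ * Ωᵀ * A

/-- The Nyström-preconditioned matrix `M̂ = P̂^{-1/2} (A + I) P̂^{-1/2}` with `P̂ = Â + I`. -/
noncomputable def nysPrec {n ℓ : ℕ} (A : Matrix (Fin n) (Fin n) ℝ)
    (Ω : Matrix (Fin n) (Fin ℓ) ℝ) : Matrix (Fin n) (Fin n) ℝ :=
  invSqrt (nystrom A Ω + 1) * (A + 1) * invSqrt (nystrom A Ω + 1)

/-!
Since `A + I ⪰ P̂`, conjugating by the symmetric matrix `P̂^{-1/2}` gives `M̂ ⪰ I`. The logarithm is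
operator monotone, so both `log M̂ ⪰ log I = 0` and `log (A + I) - log P̂ ⪰ 0`; the nuclear norm
of a positive semidefinite matrix is its trace. Finally `trace (log B) = log (det B)` and
`det M̂ = det (A + I) / det P̂`.
-/

open scoped MatrixOrder ComplexOrder

lemma Matrix.PosDef.of_le {𝕜 m : Type*} [RCLike 𝕜] [Fintype m] {A B : Matrix m m 𝕜}
    (hA : A.PosDef) (hAB : A ≤ B) : B.PosDef := by
  simpa using hA.add_posSemidef (Matrix.le_iff.mp hAB)

section Complexification

variable {m : Type*} [Fintype m] [DecidableEq m]

noncomputable def ofRealStarAlgHom : Matrix m m ℝ →⋆ₐ[ℝ] Matrix m m ℂ :=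
  { (Complex.ofRealAm : ℝ →ₐ[ℝ] ℂ).mapMatrix with
    map_star' := fun B => by ext; simp }

lemma ofRealStarAlgHom_apply (B : Matrix m m ℝ) :
    ofRealStarAlgHom B = B.map Complex.ofReal := rfl

lemma ofRealStarAlgHom_injective : Function.Injective (ofRealStarAlgHom (m := m)) :=
  Matrix.map_injective Complex.ofReal_injective

lemma ofRealStarAlgHom_le_iff {A B : Matrix m m ℝ} :
    ofRealStarAlgHom A ≤ ofRealStarAlgHom B ↔ A ≤ B := by
  refine ⟨fun h => ?_, fun h => OrderHomClass.mono ofRealStarAlgHom h⟩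
  rw [Matrix.le_iff, ← map_sub] at h
  rw [Matrix.le_iff]
  refine .of_dotProduct_mulVec_nonneg
    (ofRealStarAlgHom_injective <| (map_star _ _).trans h.1.isSelfAdjoint) fun x => ?_
  have hx := h.dotProduct_mulVec_nonneg (Complex.ofReal ∘ x)
  have hcast : star (Complex.ofReal ∘ x) ⬝ᵥ ofRealStarAlgHom (B - A) *ᵥ (Complex.ofReal ∘ x)
      = ((star x ⬝ᵥ (B - A) *ᵥ x : ℝ) : ℂ) := by
    simp [ofRealStarAlgHom_apply, dotProduct, mulVec]
  rwa [hcast, Complex.zero_le_real] at hx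

lemma ofRealStarAlgHom_cfc (f : ℝ → ℝ) {B : Matrix m m ℝ} (hB : B.IsHermitian) :
    ofRealStarAlgHom (cfc f B) = cfc f (ofRealStarAlgHom B) :=
  ofRealStarAlgHom.map_cfc f B (B.finite_real_spectrum.continuousOn f)
    (continuous_id.matrix_map Complex.continuous_ofReal) hB.isSelfAdjoint
    (hB.isSelfAdjoint.map ofRealStarAlgHom)

open scoped Matrix.Norms.L2Operator in
/-- Real matrices do not form a C⋆-algebra, so the operator monotonicity of the logarithm is
pulled back from complex matrices. -/
lemma cfc_log_le_cfc_log {A B : Matrix m m ℝ} (hA : A.PosDef) (hAB : A ≤ B) :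
    cfc Real.log A ≤ cfc Real.log B := by
  rw [← ofRealStarAlgHom_le_iff, ofRealStarAlgHom_cfc _ hA.1,
    ofRealStarAlgHom_cfc _ (hA.of_le hAB).1]
  exact CFC.log_le_log (OrderHomClass.mono ofRealStarAlgHom hAB)
    ((hA.isUnit.map ofRealStarAlgHom).isStrictlyPositive
      (map_nonneg ofRealStarAlgHom hA.posSemidef.nonneg))

end Complexification

section SpectralCalculus

variable {n : ℕ}

lemma posSemidefSqrt_eq_cfcSqrt {B : Matrix (Fin n) (Fin n) ℝ} (hB : B.PosSemidef) :
    posSemidefSqrt hB = CFC.sqrt B := by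
  rw [CFC.sqrt_eq_real_sqrt B hB.nonneg, cfcₙ_eq_cfc, hB.1.cfc_eq, IsHermitian.cfc,
    Unitary.conjStarAlgAut_apply]
  simp [posSemidefSqrt, Function.comp_def]

lemma matLog_eq_cfc {B : Matrix (Fin n) (Fin n) ℝ} (hB : B.IsHermitian) :
    matLog B = cfc Real.log B := by
  rw [hB.cfc_eq, IsHermitian.cfc, Unitary.conjStarAlgAut_apply, matLog, dif_pos hB]
  simp [Function.comp_def]

lemma matLog_le_matLog {A B : Matrix (Fin n) (Fin n) ℝ} (hA : A.PosDef) (hAB : A ≤ B) :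
    matLog A ≤ matLog B := by
  rw [matLog_eq_cfc hA.1, matLog_eq_cfc (hA.of_le hAB).1]
  exact cfc_log_le_cfc_log hA hAB

lemma matLog_nonneg {B : Matrix (Fin n) (Fin n) ℝ} (hB : 1 ≤ B) : 0 ≤ matLog B := by
  simpa [matLog_eq_cfc isHermitian_one] using matLog_le_matLog PosDef.one hB

lemma trace_matLog {B : Matrix (Fin n) (Fin n) ℝ} (hB : B.PosDef) :
    (matLog B).trace = Real.log B.det := by
  have hU : star (hB.1.eigenvectorUnitary : Matrix (Fin n) (Fin n) ℝ) *
      hB.1.eigenvectorUnitary = 1 := mem_unitaryGroup_iff'.mp hB.1.eigenvectorUnitary.2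
  rw [matLog, dif_pos hB.1, trace_mul_cycle, hU, one_mul, trace_diagonal,
    hB.1.det_eq_prod_eigenvalues, ← Real.log_prod fun i _ => (hB.eigenvalues_pos i).ne']
  simp

lemma nuclearNorm_eq_trace {B : Matrix (Fin n) (Fin n) ℝ} (hB : B.PosSemidef) :
    nuclearNorm B = B.trace := by
  have hS : (Bᴴ * B).PosSemidef := posSemidef_conjTranspose_mul_self B
  have hsqrt : posSemidefSqrt hS = B := by
    rw [posSemidefSqrt_eq_cfcSqrt, hB.1.eq]
    exact CFC.sqrt_mul_self B hB.nonneg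
  have hU : star (hS.1.eigenvectorUnitary : Matrix (Fin n) (Fin n) ℝ) *
      hS.1.eigenvectorUnitary = 1 := mem_unitaryGroup_iff'.mp hS.1.eigenvectorUnitary.2
  calc nuclearNorm B = (posSemidefSqrt hS).trace := by
        rw [posSemidefSqrt, trace_mul_cycle, hU, one_mul, trace_diagonal]; rfl
    _ = B.trace := by rw [hsqrt]

end SpectralCalculus

section InvSqrt

variable {n : ℕ} {P : Matrix (Fin n) (Fin n) ℝ}

lemma invSqrt_eq_inv_sqrt (hP : P.PosSemidef) : invSqrt P = (CFC.sqrt P)⁻¹ := by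
  rw [invSqrt, dif_pos hP, posSemidefSqrt_eq_cfcSqrt]

lemma isHermitian_invSqrt (hP : P.PosSemidef) : (invSqrt P).IsHermitian := by
  rw [invSqrt_eq_inv_sqrt hP]
  exact (CFC.sqrt_nonneg P).posSemidef.1.inv

lemma invSqrt_mul_self_mul_invSqrt (hP : P.PosDef) : invSqrt P * P * invSqrt P = 1 := by
  have hSS : CFC.sqrt P * CFC.sqrt P = P := CFC.sqrt_mul_sqrt_self P hP.posSemidef.nonneg
  have hS : IsUnit (CFC.sqrt P).det := by
    refine isUnit_iff_ne_zero.mpr fun h => hP.det_pos.ne' ?_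
    rw [← hSS, det_mul, h, zero_mul]
  rw [invSqrt_eq_inv_sqrt hP.posSemidef]
  generalize CFC.sqrt P = S at hSS hS
  subst hSS
  simp only [Matrix.mul_assoc, mul_nonsing_inv _ hS, nonsing_inv_mul _ hS, Matrix.mul_one]

lemma one_le_invSqrt_mul_mul_invSqrt (hP : P.PosDef) {X : Matrix (Fin n) (Fin n) ℝ}
    (hPX : P ≤ X) : 1 ≤ invSqrt P * X * invSqrt P :=
  invSqrt_mul_self_mul_invSqrt hP ▸
    (isHermitian_invSqrt hP.posSemidef).isSelfAdjoint.conjugate_le_conjugate hPX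

lemma det_invSqrt_mul_mul_invSqrt (hP : P.PosDef) (X : Matrix (Fin n) (Fin n) ℝ) :
    (invSqrt P * X * invSqrt P).det = X.det / P.det := by
  have h := congrArg det (invSqrt_mul_self_mul_invSqrt hP)
  rw [det_mul, det_mul, det_one] at h
  rw [eq_div_iff hP.det_pos.ne', det_mul, det_mul]
  linear_combination X.det * h

end InvSqrt

theorem stmt11_general {n : ℕ} (A Ahat : Matrix (Fin n) (Fin n) ℝ)
    (hpsd : Ahat.PosSemidef) (hle : (A - Ahat).PosSemidef) :
    nuclearNorm (matLog (invSqrt (Ahat + 1) * (A + 1) * invSqrt (Ahat + 1)))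
        = (matLog (A + 1)).trace - (matLog (Ahat + 1)).trace ∧
      nuclearNorm (matLog (invSqrt (Ahat + 1) * (A + 1) * invSqrt (Ahat + 1)))
        = nuclearNorm (matLog (A + 1) - matLog (Ahat + 1)) := by
  have hP : (Ahat + 1).PosDef := PosDef.posSemidef_add hpsd PosDef.one
  have hPA : Ahat + 1 ≤ A + 1 := by rwa [Matrix.le_iff, add_sub_add_right_eq_sub]
  have hA : (A + 1).PosDef := hP.of_le hPA
  have hM := one_le_invSqrt_mul_mul_invSqrt hP hPA
  have hlogM := (matLog_nonneg hM).posSemidef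
  have hlogA := (sub_nonneg.mpr (matLog_le_matLog hP hPA)).posSemidef
  have htrace : (matLog (invSqrt (Ahat + 1) * (A + 1) * invSqrt (Ahat + 1))).trace
      = (matLog (A + 1)).trace - (matLog (Ahat + 1)).trace := by
    rw [trace_matLog (PosDef.one.of_le hM), det_invSqrt_mul_mul_invSqrt hP,
      Real.log_div hA.det_pos.ne' hP.det_pos.ne', trace_matLog hA, trace_matLog hP]
  rw [nuclearNorm_eq_trace hlogM, nuclearNorm_eq_trace hlogA, trace_sub, htrace]
  exact ⟨rfl, rfl⟩

theorem stmt11 {n : ℕ} (A Ahat : Matrix (Fin n) (Fin n) ℝ) (hAs : A.IsSymm) (hAhs : Ahat.IsSymm)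
    (hpsd : Ahat.PosSemidef) (hle : (A - Ahat).PosSemidef) :
    nuclearNorm (matLog (invSqrt (Ahat + 1) * (A + 1) * invSqrt (Ahat + 1)))
        = (matLog (A + 1)).trace - (matLog (Ahat + 1)).trace ∧
      nuclearNorm (matLog (invSqrt (Ahat + 1) * (A + 1) * invSqrt (Ahat + 1)))
        = nuclearNorm (matLog (A + 1) - matLog (Ahat + 1)) :=
  stmt11_general A Ahat hpsd hle
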